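/- arXiv:1306.0115 — 2 statements merged into one kernel-verified Lean document; each statement's English description precedes it below -/
import Mathlib

section
/- The coupled spin-oscillator Hamiltonians J = (u²+v²)/2 + z and H = (ux+vy)/2 Poisson commute with respect to the product Poisson structure on S² × ℝ². -/
/-- The product Poisson bracket on `S² × ℝ²`, in ambient coordinates `(x,y,z,u,v)`:
the sum of (minus) the triple-product sphere bracket on `(x,y,z)` and the canonical
bracket on `(u,v)`. -/
noncomputable def spinOscBracket (f g : ℝ × ℝ × ℝ × ℝ × ℝ → ℝ)
    (p : ℝ × ℝ × ℝ × ℝ × ℝ) : ℝ :=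
  let fx := fderiv ℝ f p (1, 0, 0, 0, 0)
  let fy := fderiv ℝ f p (0, 1, 0, 0, 0)
  let fz := fderiv ℝ f p (0, 0, 1, 0, 0)
  let fu := fderiv ℝ f p (0, 0, 0, 1, 0)
  let fv := fderiv ℝ f p (0, 0, 0, 0, 1)
  let gx := fderiv ℝ g p (1, 0, 0, 0, 0)
  let gy := fderiv ℝ g p (0, 1, 0, 0, 0)
  let gz := fderiv ℝ g p (0, 0, 1, 0, 0)
  let gu := fderiv ℝ g p (0, 0, 0, 1, 0)
  let gv := fderiv ℝ g p (0, 0, 0, 0, 1)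
  (fu * gv - fv * gu)
    - ((fy * gz - fz * gy) * p.1 + (fz * gx - fx * gz) * p.2.1
        + (fx * gy - fy * gx) * p.2.2.1)


abbrev E5 : Type := ℝ × ℝ × ℝ × ℝ × ℝ

noncomputable def cX : E5 →L[ℝ] ℝ := ContinuousLinearMap.fst ℝ ℝ _
noncomputable def cY : E5 →L[ℝ] ℝ :=
  (ContinuousLinearMap.fst ℝ ℝ _).comp (ContinuousLinearMap.snd ℝ ℝ _)
noncomputable def cZ : E5 →L[ℝ] ℝ :=
  ((ContinuousLinearMap.fst ℝ ℝ _).comp (ContinuousLinearMap.snd ℝ ℝ _)).comp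
    (ContinuousLinearMap.snd ℝ ℝ _)
noncomputable def cU : E5 →L[ℝ] ℝ :=
  (((ContinuousLinearMap.fst ℝ ℝ _).comp (ContinuousLinearMap.snd ℝ ℝ _)).comp
    (ContinuousLinearMap.snd ℝ ℝ _)).comp (ContinuousLinearMap.snd ℝ ℝ _)
noncomputable def cV : E5 →L[ℝ] ℝ :=
  (((ContinuousLinearMap.snd ℝ ℝ ℝ).comp (ContinuousLinearMap.snd ℝ ℝ _)).comp
    (ContinuousLinearMap.snd ℝ ℝ _)).comp (ContinuousLinearMap.snd ℝ ℝ _)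

/-- The coupled spin-oscillator Hamiltonians `J = (u²+v²)/2 + z` and `H = (ux+vy)/2`
Poisson commute on `S² × ℝ²` with respect to the product Poisson structure. -/
theorem spin_oscillator_poisson_commute :
    ∀ p : ℝ × ℝ × ℝ × ℝ × ℝ,
      p.1 ^ 2 + p.2.1 ^ 2 + p.2.2.1 ^ 2 = 1 →
      spinOscBracket
        (fun q => (q.2.2.2.1 ^ 2 + q.2.2.2.2 ^ 2) / 2 + q.2.2.1)
        (fun q => (q.2.2.2.1 * q.1 + q.2.2.2.2 * q.2.1) / 2) p = 0 := by
  intro p _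
  have hfun : (fun q : E5 => (q.2.2.2.1 ^ 2 + q.2.2.2.2 ^ 2) / 2 + q.2.2.1)
      = (fun q : E5 => (q.2.2.2.1 * q.2.2.2.1 + q.2.2.2.2 * q.2.2.2.2) * (1/2) + q.2.2.1) := by
    funext q; ring
  rw [hfun]
  have hJ : HasFDerivAt
      (fun q : E5 => (q.2.2.2.1 * q.2.2.2.1 + q.2.2.2.2 * q.2.2.2.2) * (1/2) + q.2.2.1)
      _ p :=
    ((((cU.hasFDerivAt (x := p)).mul (cU.hasFDerivAt (x := p))).add
      ((cV.hasFDerivAt (x := p)).mul (cV.hasFDerivAt (x := p)))).mul_const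
      (1/2)).add (cZ.hasFDerivAt (x := p))
  have hfun2 : (fun q : E5 => (q.2.2.2.1 * q.1 + q.2.2.2.2 * q.2.1) / 2)
      = (fun q : E5 => (q.2.2.2.1 * q.1 + q.2.2.2.2 * q.2.1) * (1/2)) := by
    funext q; ring
  rw [hfun2]
  have hH : HasFDerivAt (fun q : E5 => (q.2.2.2.1 * q.1 + q.2.2.2.2 * q.2.1) * (1/2))
      _ p :=
    (((cU.hasFDerivAt (x := p)).mul (cX.hasFDerivAt (x := p))).add
      ((cV.hasFDerivAt (x := p)).mul (cY.hasFDerivAt (x := p)))).mul_const (1/2)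
  simp only [spinOscBracket, hJ.fderiv, hH.fderiv]
  simp [cX, cY, cZ, cU, cV]
  ring
end

section
/- The singular fiber of the coupled spin-oscillator is covered by the two explicit parametrizations: every point (x,y,z,u,v) with x²+y²+z² = 1, (u²+v²)/2 + z = 1 and ux + vy = 0 is of the form (ρ cos θ̃, ρ sin θ̃, z̃, r cos t, r sin t) with r = √(2(1−z̃)), ρ = √(1−z̃²), t = θ̃ ± π/2, for some z̃ ∈ [−1,1] and θ̃ ∈ ℝ, and conversely every such point satisfies the three equations. -/
/-!
On the fiber `z` is the free parameter: the two quadrics fix `|(x, y)| = √(1 - z²)` and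
`|(u, v)| = √(2(1 - z))`, and `H = 0` says that `(u, v)` is orthogonal to `(x, y)`.
In the plane, a vector orthogonal to `ρ (cos θ, sin θ)` is `± r (-sin θ, cos θ)`, i.e. `(x, y)` turned
by `± π/2` and rescaled; where `ρ = 0` the angle `θ` is read off `(u, v)` instead.
-/

open Real

lemma exists_eq_mul_cos_sin {a b ρ : ℝ} (hρ : 0 ≤ ρ) (h : a ^ 2 + b ^ 2 = ρ ^ 2) :
    ∃ θ : ℝ, a = ρ * cos θ ∧ b = ρ * sin θ := by
  have hnorm : ‖(⟨a, b⟩ : ℂ)‖ = ρ := by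
    rw [Complex.norm_eq_sqrt_sq_add_sq, h, sqrt_sq hρ]
  refine ⟨Complex.arg ⟨a, b⟩, ?_, ?_⟩
  · simpa [hnorm] using (Complex.norm_mul_cos_arg ⟨a, b⟩).symm
  · simpa [hnorm] using (Complex.norm_mul_sin_arg ⟨a, b⟩).symm

lemma cos_sin_add_sign_mul_pi_div_two {ε : ℝ} (hε : ε = 1 ∨ ε = -1) (θ : ℝ) :
    cos (θ + ε * π / 2) = -ε * sin θ ∧ sin (θ + ε * π / 2) = ε * cos θ := by
  rcases hε with rfl | rfl
  · simp [cos_add_pi_div_two, sin_add_pi_div_two]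
  · simp [neg_div, ← sub_eq_add_neg, cos_sub_pi_div_two, sin_sub_pi_div_two]

lemma orthogonal_pair_iff_exists_angle {x y u v ρ r : ℝ} (hρ : 0 ≤ ρ) (hr : 0 ≤ r) :
    (x ^ 2 + y ^ 2 = ρ ^ 2 ∧ u ^ 2 + v ^ 2 = r ^ 2 ∧ u * x + v * y = 0) ↔
      ∃ ε : ℝ, (ε = 1 ∨ ε = -1) ∧ ∃ θ : ℝ,
        x = ρ * cos θ ∧ y = ρ * sin θ ∧
        u = r * cos (θ + ε * π / 2) ∧ v = r * sin (θ + ε * π / 2) := by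
  constructor
  · rintro ⟨hxy, huv, horth⟩
    rcases hρ.eq_or_lt with rfl | hρpos
    · obtain ⟨φ, hu, hv⟩ := exists_eq_mul_cos_sin hr huv
      have hx : x = 0 := by nlinarith [sq_nonneg y]
      have hy : y = 0 := by nlinarith [sq_nonneg x]
      refine ⟨1, Or.inl rfl, φ - π / 2, by rw [hx, zero_mul], by rw [hy, zero_mul], ?_, ?_⟩ <;>
        rwa [one_mul, sub_add_cancel]
    obtain ⟨θ, hx, hy⟩ := exists_eq_mul_cos_sin hρ hxy
    have hperp : u * cos θ + v * sin θ = 0 := by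
      subst hx hy
      exact (mul_eq_zero.mp (by linear_combination horth)).resolve_left hρpos.ne'
    -- `c` is the coordinate of `(u, v)` along `(-sin θ, cos θ)`.
    set c := v * cos θ - u * sin θ
    have hu : u = -c * sin θ := by
      linear_combination cos θ * hperp - u * sin_sq_add_cos_sq θ
    have hv : v = c * cos θ := by
      linear_combination sin θ * hperp - v * sin_sq_add_cos_sq θ
    have hc : c ^ 2 = r ^ 2 := by
      rw [← huv, hu, hv]; linear_combination (-c ^ 2) * sin_sq_add_cos_sq θ
    obtain ⟨ε, hε, hcε⟩ : ∃ ε : ℝ, (ε = 1 ∨ ε = -1) ∧ c = ε * r := by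
      rcases sq_eq_sq_iff_eq_or_eq_neg.mp hc with hc | hc
      exacts [⟨1, Or.inl rfl, by rw [hc, one_mul]⟩, ⟨-1, Or.inr rfl, by rw [hc, neg_one_mul]⟩]
    obtain ⟨hcos, hsin⟩ := cos_sin_add_sign_mul_pi_div_two hε θ
    refine ⟨ε, hε, θ, hx, hy, ?_, ?_⟩
    · rw [hcos, hu, hcε]; ring
    · rw [hsin, hv, hcε]; ring
  · rintro ⟨ε, hε, θ, hx, hy, hu, hv⟩
    obtain ⟨hcos, hsin⟩ := cos_sin_add_sign_mul_pi_div_two hε θ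
    have hε2 : ε ^ 2 = 1 := by rcases hε with rfl | rfl <;> norm_num
    rw [hcos] at hu; rw [hsin] at hv
    subst hx hy hu hv
    refine ⟨?_, ?_, ?_⟩
    · linear_combination ρ ^ 2 * cos_sq_add_sin_sq θ
    · linear_combination r ^ 2 * ε ^ 2 * sin_sq_add_cos_sq θ + r ^ 2 * hε2
    · ring

/-- The singular fiber `{J = 1, H = 0}` of the coupled spin-oscillator is exactly the
union of the images of the two explicit parametrizations `S₊₁` and `S₋₁`. -/
theorem spin_oscillator_singular_fiber (x y z u v : ℝ) :
    (x ^ 2 + y ^ 2 + z ^ 2 = 1 ∧ (u ^ 2 + v ^ 2) / 2 + z = 1 ∧ u * x + v * y = 0)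
      ↔ ∃ ε : ℝ, (ε = 1 ∨ ε = -1) ∧ ∃ z' ∈ Set.Icc (-1 : ℝ) 1, ∃ θ : ℝ,
          x = Real.sqrt (1 - z' ^ 2) * cos θ ∧
          y = Real.sqrt (1 - z' ^ 2) * sin θ ∧
          z = z' ∧
          u = Real.sqrt (2 * (1 - z')) * cos (θ + ε * π / 2) ∧
          v = Real.sqrt (2 * (1 - z')) * sin (θ + ε * π / 2) := by
  have hframe := orthogonal_pair_iff_exists_angle (x := x) (y := y) (u := u) (v := v)
    (sqrt_nonneg (1 - z ^ 2)) (sqrt_nonneg (2 * (1 - z)))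
  constructor
  · rintro ⟨hsphere, hJ, hH⟩
    have hz1 : z ≤ 1 := by nlinarith [sq_nonneg u, sq_nonneg v]
    have hz0 : -1 ≤ z := by nlinarith [sq_nonneg x, sq_nonneg y]
    rw [sq_sqrt (by nlinarith), sq_sqrt (by linarith)] at hframe
    obtain ⟨ε, hε, θ, hx, hy, hu, hv⟩ := hframe.mp ⟨by linarith, by linarith, hH⟩
    exact ⟨ε, hε, z, ⟨hz0, hz1⟩, θ, hx, hy, rfl, hu, hv⟩
  · rintro ⟨ε, hε, z, ⟨hz0, hz1⟩, θ, hx, hy, rfl, hu, hv⟩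
    rw [sq_sqrt (by nlinarith), sq_sqrt (by linarith)] at hframe
    obtain ⟨hxy, huv, hH⟩ := hframe.mpr ⟨ε, hε, θ, hx, hy, hu, hv⟩
    exact ⟨by linarith, by linarith, hH⟩
end
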